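/- arXiv:1208.0232 — 3 statements merged into one kernel-verified Lean document; each statement's English description precedes it below -/
import Mathlib

section
/- Let ξ⁰ : ℝ² → ℝ and η : ℝ³ → ℝ be smooth functions, and set ξ(t,x,u) := u + ξ⁰(t,x). Suppose ξ and η satisfy the determining system (i) ξ_uu = 0; (ii) −2ξ_xu − 2ξ_u·ξ + 2u·ξ_u + η_uu = 0; (iii) 2η_xu + 2ξ_u·η + η − ξ_t + u·ξ_x − ξ_xx − 2ξ_x·ξ = 0; (iv) η_t + u·η_x + η_xx + 2ξ_x·η = 0 at every point of ℝ³. Then ξ⁰ ≡ 0 and η ≡ 0; that is, Q = ∂_t + u·∂_x is, up to equivalence, the unique regular reduction operator of the Burgers equation with ξ_u = 1. -/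
/-- Partial derivative with respect to the first variable `t` (of three). -/
noncomputable def p1 (f : ℝ × ℝ × ℝ → ℝ) : ℝ × ℝ × ℝ → ℝ :=
  fun p => deriv (fun s => f (s, p.2.1, p.2.2)) p.1

/-- Partial derivative with respect to the second variable `x` (of three). -/
noncomputable def p2 (f : ℝ × ℝ × ℝ → ℝ) : ℝ × ℝ × ℝ → ℝ :=
  fun p => deriv (fun s => f (p.1, s, p.2.2)) p.2.1

/-- Partial derivative with respect to the third variable `u` (of three). -/
noncomputable def p3 (f : ℝ × ℝ × ℝ → ℝ) : ℝ × ℝ × ℝ → ℝ :=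
  fun p => deriv (fun s => f (p.1, p.2.1, s)) p.2.2

lemma p3_fderiv (f : ℝ × ℝ × ℝ → ℝ) (hf : ContDiff ℝ (⊤ : ℕ∞) f) :
    p3 f = fun p => fderiv ℝ f p ((0:ℝ), (0:ℝ), (1:ℝ)) := by
  funext p
  have hline : HasDerivAt (fun s : ℝ => ((p.1, p.2.1, s) : ℝ × ℝ × ℝ)) ((0:ℝ),(0:ℝ),(1:ℝ)) p.2.2 :=
    (hasDerivAt_const _ _).prodMk ((hasDerivAt_const _ _).prodMk (hasDerivAt_id _))
  have h := ((hf.differentiable (by simp) (p.1, p.2.1, p.2.2)).hasFDerivAt.comp_hasDerivAt p.2.2 hline)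
  exact h.deriv

lemma p3_smooth (f : ℝ × ℝ × ℝ → ℝ) (hf : ContDiff ℝ (⊤ : ℕ∞) f) : ContDiff ℝ (⊤ : ℕ∞) (p3 f) := by
  rw [p3_fderiv f hf]
  exact (ContinuousLinearMap.apply ℝ ℝ ((0:ℝ),(0:ℝ),(1:ℝ))).contDiff.comp (hf.fderiv_right (by simp))

lemma quad_of_deriv2 (g : ℝ → ℝ) (c : ℝ) (hg : Differentiable ℝ g)
    (hg' : Differentiable ℝ (deriv g)) (h : ∀ u, deriv (deriv g) u = 2 * c) :
    ∀ u, g u = g 0 + deriv g 0 * u + c * u ^ 2 := by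
  have h1 : ∀ u, deriv g u = deriv g 0 + 2 * c * u := by
    intro u
    have hφ : Differentiable ℝ (fun s => deriv g s - (deriv g 0 + 2 * c * s)) := by fun_prop
    have hd : ∀ s, deriv (fun s => deriv g s - (deriv g 0 + 2 * c * s)) s = 0 := by
      intro s
      have h2 : HasDerivAt (fun s : ℝ => deriv g 0 + 2 * c * s) (2 * c) s := by
        simpa using (((hasDerivAt_id s).const_mul (2*c)).const_add (deriv g 0))
      have h3 := ((hg' s).hasDerivAt.sub h2).deriv
      rw [show (fun s => deriv g s - (deriv g 0 + 2 * c * s)) = (deriv g - fun s => deriv g 0 + 2 * c * s) from rfl, h3, h s]; ring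
    have h4 := is_const_of_deriv_eq_zero hφ hd u 0
    simp at h4; linarith
  intro u
  have hψ : Differentiable ℝ (fun s => g s - (g 0 + deriv g 0 * s + c * s ^ 2)) := by fun_prop
  have hd : ∀ s, deriv (fun s => g s - (g 0 + deriv g 0 * s + c * s ^ 2)) s = 0 := by
    intro s
    have h2 : HasDerivAt (fun s : ℝ => g 0 + deriv g 0 * s + c * s ^ 2)
        (deriv g 0 + 2 * c * s) s := by
      have := (((hasDerivAt_id s).const_mul (deriv g 0)).const_add (g 0)).add
        ((hasDerivAt_pow 2 s).const_mul c)
      refine this.congr_deriv ?_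
      push_cast; ring
    have h3 := ((hg s).hasDerivAt.sub h2).deriv
    rw [show (fun s => g s - (g 0 + deriv g 0 * s + c * s ^ 2)) = (g - fun s => g 0 + deriv g 0 * s + c * s ^ 2) from rfl, h3, h1 s]; ring
  have h4 := is_const_of_deriv_eq_zero hψ hd u 0
  simp at h4; linarith

/-- In the case `ξ_u = 1`, i.e. `ξ = u + ξ⁰(t,x)`, the determining system for
regular reduction operators of the Burgers equation forces `ξ⁰ ≡ 0` and `η ≡ 0`,
so `Q = ∂_t + u ∂_x` is the unique such reduction operator. -/
theorem stmt16 (ξ0 : ℝ × ℝ → ℝ) (η : ℝ × ℝ × ℝ → ℝ)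
    (hξ0 : ContDiff ℝ (⊤ : ℕ∞) ξ0) (hη : ContDiff ℝ (⊤ : ℕ∞) η) :
    let ξ : ℝ × ℝ × ℝ → ℝ := fun p => p.2.2 + ξ0 (p.1, p.2.1)
    (∀ p : ℝ × ℝ × ℝ, p3 (p3 ξ) p = 0) →
    (∀ p : ℝ × ℝ × ℝ,
      -2 * p3 (p2 ξ) p - 2 * p3 ξ p * ξ p + 2 * p.2.2 * p3 ξ p + p3 (p3 η) p = 0) →
    (∀ p : ℝ × ℝ × ℝ,
      2 * p3 (p2 η) p + 2 * p3 ξ p * η p + η p - p1 ξ p + p.2.2 * p2 ξ p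
        - p2 (p2 ξ) p - 2 * p2 ξ p * ξ p = 0) →
    (∀ p : ℝ × ℝ × ℝ,
      p1 η p + p.2.2 * p2 η p + p2 (p2 η) p + 2 * p2 ξ p * η p = 0) →
    (∀ q : ℝ × ℝ, ξ0 q = 0) ∧ (∀ p : ℝ × ℝ × ℝ, η p = 0) := by
  intro ξ h1 h2 h3 h4
  clear h1 h4
  simp only [ξ] at h2 h3
  have hp3η : ContDiff ℝ (⊤ : ℕ∞) (p3 η) := p3_smooth η hη
  -- basic derivatives of ξ
  have hξ3 : ∀ p : ℝ×ℝ×ℝ, p3 (fun p : ℝ×ℝ×ℝ => p.2.2 + ξ0 (p.1, p.2.1)) p = 1 := by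
    intro p; simp [p3]
  have hξ23 : ∀ p : ℝ×ℝ×ℝ, p3 (p2 (fun p : ℝ×ℝ×ℝ => p.2.2 + ξ0 (p.1, p.2.1))) p = 0 := by
    intro p; simp [p3, p2, deriv_const_add]
  -- equation (ii) gives η_uu = 2 ξ0
  have hc : ∀ p : ℝ×ℝ×ℝ, p3 (p3 η) p = 2 * ξ0 (p.1, p.2.1) := by
    intro p
    have := h2 p
    rw [hξ3 p, hξ23 p] at this
    linarith
  -- quadratic decomposition of η
  set A : ℝ × ℝ → ℝ := fun q => η (q.1, q.2, 0) with hA_def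
  set B : ℝ × ℝ → ℝ := fun q => p3 η (q.1, q.2, 0) with hB_def
  have hA : ContDiff ℝ (⊤ : ℕ∞) A := hη.comp (by fun_prop)
  have hB : ContDiff ℝ (⊤ : ℕ∞) B := hp3η.comp (by fun_prop)
  have hdec : ∀ t x u : ℝ, η (t, x, u) = A (t,x) + B (t,x) * u + ξ0 (t,x) * u ^ 2 := by
    intro t x u
    have hg : Differentiable ℝ (fun s => η (t, x, s)) :=
      (hη.differentiable (by simp)).comp (by fun_prop)
    have hderiv_eq : deriv (fun s => η (t, x, s)) = fun s => p3 η (t, x, s) := rfl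
    have hg' : Differentiable ℝ (deriv (fun s => η (t, x, s))) := by
      rw [hderiv_eq]
      exact (hp3η.differentiable (by simp)).comp (by fun_prop)
    have hdd : ∀ u, deriv (deriv (fun s => η (t, x, s))) u = 2 * ξ0 (t, x) := by
      intro u
      rw [hderiv_eq]
      exact hc (t, x, u)
    have := quad_of_deriv2 (fun s => η (t, x, s)) (ξ0 (t,x)) hg hg' hdd u
    exact this
  -- x-derivative of η via the decomposition
  have hp2η : ∀ t x u : ℝ, p2 η (t,x,u) =
      deriv (fun s => A (t,s)) x + deriv (fun s => B (t,s)) x * u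
        + deriv (fun s => ξ0 (t,s)) x * u ^ 2 := by
    intro t x u
    have hfun : (fun s => η (t, s, u)) =
        fun s => A (t,s) + B (t,s) * u + ξ0 (t,s) * u ^ 2 :=
      funext fun s => hdec t s u
    have hA' : HasDerivAt (fun s => A (t,s)) (deriv (fun s => A (t,s)) x) x :=
      (((hA.differentiable (by simp)).comp (by fun_prop : Differentiable ℝ fun s : ℝ => (t, s))) x).hasDerivAt
    have hB' : HasDerivAt (fun s => B (t,s)) (deriv (fun s => B (t,s)) x) x :=
      (((hB.differentiable (by simp)).comp (by fun_prop : Differentiable ℝ fun s : ℝ => (t, s))) x).hasDerivAt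
    have hc' : HasDerivAt (fun s => ξ0 (t,s)) (deriv (fun s => ξ0 (t,s)) x) x :=
      (((hξ0.differentiable (by simp)).comp (by fun_prop : Differentiable ℝ fun s : ℝ => (t, s))) x).hasDerivAt
    have hder := ((hA'.add (hB'.mul_const u)).add (hc'.mul_const (u ^ 2))).deriv
    show deriv (fun s => η (t, s, u)) x = _
    rw [hfun]
    exact hder
  -- u-derivative of that
  have hp32η : ∀ t x u : ℝ, p3 (p2 η) (t,x,u) =
      deriv (fun s => B (t,s)) x + 2 * deriv (fun s => ξ0 (t,s)) x * u := by
    intro t x u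
    have hfun : (fun s => p2 η (t, x, s)) =
        fun s => deriv (fun s' => A (t,s')) x + deriv (fun s' => B (t,s')) x * s
          + deriv (fun s' => ξ0 (t,s')) x * s ^ 2 :=
      funext fun s => hp2η t x s
    show deriv (fun s => p2 η (t, x, s)) u = _
    rw [hfun]
    have hlin : HasDerivAt (fun s : ℝ => deriv (fun s' => B (t,s')) x * s)
        (deriv (fun s' => B (t,s')) x) u := by
      simpa using (hasDerivAt_id u).const_mul (deriv (fun s' => B (t,s')) x)
    have hsq : HasDerivAt (fun s : ℝ => deriv (fun s' => ξ0 (t,s')) x * s ^ 2)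
        (2 * deriv (fun s' => ξ0 (t,s')) x * u) u := by
      have := (hasDerivAt_pow 2 u).const_mul (deriv (fun s' => ξ0 (t,s')) x)
      refine this.congr_deriv ?_
      push_cast; ring
    have := ((hlin.const_add (deriv (fun s' => A (t,s')) x)).add hsq).deriv
    exact this
  -- key polynomial identity from equation (iii)
  have key : ∀ t x u : ℝ,
      2 * (deriv (fun s => B (t,s)) x + 2 * deriv (fun s => ξ0 (t,s)) x * u)
        + 3 * (A (t,x) + B (t,x) * u + ξ0 (t,x) * u ^ 2)
        - deriv (fun s => ξ0 (s,x)) t + u * deriv (fun s => ξ0 (t,s)) x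
        - deriv (fun s => deriv (fun s' => ξ0 (t,s')) s) x
        - 2 * deriv (fun s => ξ0 (t,s)) x * (u + ξ0 (t,x)) = 0 := by
    intro t x u
    have H := h3 (t, x, u)
    rw [hξ3 (t,x,u), hp32η t x u] at H
    have e1 : p1 (fun p : ℝ×ℝ×ℝ => p.2.2 + ξ0 (p.1, p.2.1)) (t,x,u)
        = deriv (fun s => ξ0 (s,x)) t := by simp [p1, deriv_const_add]
    have e2 : p2 (fun p : ℝ×ℝ×ℝ => p.2.2 + ξ0 (p.1, p.2.1)) (t,x,u)
        = deriv (fun s => ξ0 (t,s)) x := by simp [p2, deriv_const_add]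
    have e3 : p2 (p2 (fun p : ℝ×ℝ×ℝ => p.2.2 + ξ0 (p.1, p.2.1))) (t,x,u)
        = deriv (fun s => deriv (fun s' => ξ0 (t,s')) s) x := by
      simp [p2, deriv_const_add]
    rw [e1, e2, e3, hdec t x u] at H
    linarith
  -- coefficient of u^2 kills ξ0
  have hξ0z : ∀ t x : ℝ, ξ0 (t, x) = 0 := by
    intro t x
    linear_combination (key t x 1 + key t x (-1) - 2 * key t x 0) / 6
  -- all x-derivatives of ξ0 vanish
  have hdx : ∀ t x : ℝ, deriv (fun s => ξ0 (t,s)) x = 0 := by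
    intro t x
    have : (fun s => ξ0 (t,s)) = fun _ : ℝ => (0:ℝ) := funext fun s => hξ0z t s
    rw [this]; simp
  have hdt : ∀ t x : ℝ, deriv (fun s => ξ0 (s,x)) t = 0 := by
    intro t x
    have : (fun s => ξ0 (s,x)) = fun _ : ℝ => (0:ℝ) := funext fun s => hξ0z s x
    rw [this]; simp
  have hdxx : ∀ t x : ℝ, deriv (fun s => deriv (fun s' => ξ0 (t,s')) s) x = 0 := by
    intro t x
    have : (fun s => deriv (fun s' => ξ0 (t,s')) s) = fun _ : ℝ => (0:ℝ) :=
      funext fun s => hdx t s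
    rw [this]; simp
  -- simplified key
  have key2 : ∀ t x u : ℝ,
      2 * deriv (fun s => B (t,s)) x + 3 * A (t,x) + 3 * B (t,x) * u = 0 := by
    intro t x u
    have := key t x u
    rw [hξ0z t x, hdx t x, hdt t x, hdxx t x] at this
    linarith
  have hBz : ∀ t x : ℝ, B (t, x) = 0 := by
    intro t x
    linear_combination (key2 t x 1 - key2 t x 0) / 3
  have hdBx : ∀ t x : ℝ, deriv (fun s => B (t,s)) x = 0 := by
    intro t x
    have : (fun s => B (t,s)) = fun _ : ℝ => (0:ℝ) := funext fun s => hBz t s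
    rw [this]; simp
  have hAz : ∀ t x : ℝ, A (t, x) = 0 := by
    intro t x
    have := key2 t x 0
    rw [hdBx t x] at this
    linarith
  refine ⟨fun q => hξ0z q.1 q.2, fun p => ?_⟩
  have := hdec p.1 p.2.1 p.2.2
  rw [hξ0z, hBz, hAz] at this
  simpa using this
end

section
/- Let ξ : ℝ² → ℝ, η¹ : ℝ² → ℝ, η⁰ : ℝ² → ℝ be smooth functions of (t,x) such that the coefficients ξ(t,x,u) := ξ(t,x) (independent of u) and η(t,x,u) := η¹(t,x)·u + η⁰(t,x) satisfy the determining system (i) ξ_uu = 0; (ii) −2ξ_xu − 2ξ_u·ξ + 2u·ξ_u + η_uu = 0; (iii) 2η_xu + 2ξ_u·η + η − ξ_t + u·ξ_x − ξ_xx − 2ξ_x·ξ = 0; (iv) η_t + u·η_x + η_xx + 2ξ_x·η = 0 at every point of ℝ³. Then η¹ = −ξ_x and η⁰ = ξ_t + 2ξ·ξ_x + 3ξ_xx, and ξ satisfies ξ_xx = 0 and ξ_tt + 2ξ·ξ_tx + 4ξ_t·ξ_x + 4ξ·(ξ_x)² = 0 at every point (t,x). -/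
/-- Partial derivative with respect to the first variable `t` (of two). -/
noncomputable def pt (f : ℝ × ℝ → ℝ) : ℝ × ℝ → ℝ :=
  fun p => deriv (fun s => f (s, p.2)) p.1

/-- Partial derivative with respect to the second variable `x` (of two). -/
noncomputable def px (f : ℝ × ℝ → ℝ) : ℝ × ℝ → ℝ :=
  fun p => deriv (fun s => f (p.1, s)) p.2

lemma slice2_diff {f : ℝ × ℝ → ℝ} (hf : ContDiff ℝ (⊤ : ℕ∞) f) (a : ℝ) :
    Differentiable ℝ (fun s => f (a, s)) :=
  (hf.differentiable (by simp)).comp ((differentiable_const a).prodMk differentiable_id)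

lemma slice1_diff {f : ℝ × ℝ → ℝ} (hf : ContDiff ℝ (⊤ : ℕ∞) f) (b : ℝ) :
    Differentiable ℝ (fun s => f (s, b)) :=
  (hf.differentiable (by simp)).comp (differentiable_id.prodMk (differentiable_const b))

lemma hasDeriv_px {f : ℝ × ℝ → ℝ} (hf : ContDiff ℝ (⊤ : ℕ∞) f) (a b : ℝ) :
    HasDerivAt (fun s => f (a, s)) (px f (a, b)) b :=
  ((slice2_diff hf a) b).hasDerivAt

lemma hasDeriv_pt {f : ℝ × ℝ → ℝ} (hf : ContDiff ℝ (⊤ : ℕ∞) f) (a b : ℝ) :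
    HasDerivAt (fun s => f (s, b)) (pt f (a, b)) a :=
  ((slice1_diff hf b) a).hasDerivAt

lemma pt_eq {f : ℝ × ℝ → ℝ} (hf : ContDiff ℝ (⊤ : ℕ∞) f) (q : ℝ × ℝ) :
    pt f q = fderiv ℝ f q (1, 0) := by
  have h1 : HasDerivAt (fun s : ℝ => (s, q.2)) ((1:ℝ), (0:ℝ)) q.1 :=
    (hasDerivAt_id q.1).prodMk (hasDerivAt_const q.1 q.2)
  have h2 := ((hf.differentiable (by simp) q).hasFDerivAt).comp_hasDerivAt q.1 h1
  simpa [pt, Function.comp_def] using h2.deriv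

lemma px_eq {f : ℝ × ℝ → ℝ} (hf : ContDiff ℝ (⊤ : ℕ∞) f) (q : ℝ × ℝ) :
    px f q = fderiv ℝ f q (0, 1) := by
  have h1 : HasDerivAt (fun s : ℝ => (q.1, s)) ((0:ℝ), (1:ℝ)) q.2 :=
    (hasDerivAt_const q.2 q.1).prodMk (hasDerivAt_id q.2)
  have h2 := ((hf.differentiable (by simp) q).hasFDerivAt).comp_hasDerivAt q.2 h1
  simpa [px, Function.comp_def] using h2.deriv

lemma pt_smooth {f : ℝ × ℝ → ℝ} (hf : ContDiff ℝ (⊤ : ℕ∞) f) : ContDiff ℝ (⊤ : ℕ∞) (pt f) := by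
  have h : ContDiff ℝ (⊤ : ℕ∞) (fun q : ℝ × ℝ => fderiv ℝ f q (1, 0)) :=
    (hf.fderiv_right (by simp)).clm_apply contDiff_const
  rw [show pt f = (fun q : ℝ × ℝ => fderiv ℝ f q (1, 0)) from funext (pt_eq hf)]; exact h

lemma px_smooth {f : ℝ × ℝ → ℝ} (hf : ContDiff ℝ (⊤ : ℕ∞) f) : ContDiff ℝ (⊤ : ℕ∞) (px f) := by
  have h : ContDiff ℝ (⊤ : ℕ∞) (fun q : ℝ × ℝ => fderiv ℝ f q (0, 1)) :=
    (hf.fderiv_right (by simp)).clm_apply contDiff_const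
  rw [show px f = (fun q : ℝ × ℝ => fderiv ℝ f q (0, 1)) from funext (px_eq hf)]; exact h

lemma clairaut {f : ℝ × ℝ → ℝ} (hf : ContDiff ℝ (⊤ : ℕ∞) f) (q : ℝ × ℝ) :
    px (pt f) q = pt (px f) q := by
  rw [px_eq (pt_smooth hf), pt_eq (px_smooth hf)]
  have hdf : Differentiable ℝ (fderiv ℝ f) := (hf.fderiv_right (m := (⊤ : ℕ∞)) (by simp)).differentiable (by simp)
  have hsym := second_derivative_symmetric (f' := fderiv ℝ f)
    (f'' := fderiv ℝ (fderiv ℝ f) q)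
    (fun y => (hf.differentiable (by simp) y).hasFDerivAt) ((hdf q).hasFDerivAt)
  have e1 : (fun p : ℝ × ℝ => pt f p) = fun p => fderiv ℝ f p (1, 0) := funext (pt_eq hf)
  have e2 : (fun p : ℝ × ℝ => px f p) = fun p => fderiv ℝ f p (0, 1) := funext (px_eq hf)
  calc fderiv ℝ (pt f) q (0,1) = fderiv ℝ (fun p => fderiv ℝ f p (1,0)) q (0,1) := by rw [← e1]
    _ = fderiv ℝ (fderiv ℝ f) q (0,1) (1,0) := by
        rw [fderiv_clm_apply (hdf q) (differentiableAt_const _)]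
        simp
    _ = fderiv ℝ (fderiv ℝ f) q (1,0) (0,1) := hsym _ _
    _ = fderiv ℝ (fun p => fderiv ℝ f p (0,1)) q (1,0) := by
        rw [fderiv_clm_apply (hdf q) (differentiableAt_const _)]
        simp
    _ = fderiv ℝ (px f) q (1,0) := by rw [← e2]

lemma p3_linear (a b : ℝ × ℝ → ℝ) (p : ℝ × ℝ × ℝ) :
    p3 (fun r => a (r.1, r.2.1) * r.2.2 + b (r.1, r.2.1)) p = a (p.1, p.2.1) := by
  show deriv (fun s => a (p.1, p.2.1) * s + b (p.1, p.2.1)) p.2.2 = a (p.1, p.2.1)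
  have h := (HasDerivAt.const_mul (a (p.1, p.2.1)) (hasDerivAt_id p.2.2)).add_const
    (b (p.1, p.2.1))
  simpa using h.deriv

lemma p2_linear {a b : ℝ × ℝ → ℝ} (ha : ContDiff ℝ (⊤ : ℕ∞) a) (hb : ContDiff ℝ (⊤ : ℕ∞) b)
    (p : ℝ × ℝ × ℝ) :
    p2 (fun r => a (r.1, r.2.1) * r.2.2 + b (r.1, r.2.1)) p
      = px a (p.1, p.2.1) * p.2.2 + px b (p.1, p.2.1) := by
  exact (((hasDeriv_px ha p.1 p.2.1).mul_const p.2.2).add (hasDeriv_px hb p.1 p.2.1)).deriv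

lemma p1_linear {a b : ℝ × ℝ → ℝ} (ha : ContDiff ℝ (⊤ : ℕ∞) a) (hb : ContDiff ℝ (⊤ : ℕ∞) b)
    (p : ℝ × ℝ × ℝ) :
    p1 (fun r => a (r.1, r.2.1) * r.2.2 + b (r.1, r.2.1)) p
      = pt a (p.1, p.2.1) * p.2.2 + pt b (p.1, p.2.1) := by
  exact (((hasDeriv_pt ha p.1 p.2.1).mul_const p.2.2).add (hasDeriv_pt hb p.1 p.2.1)).deriv

lemma px_neg (g : ℝ × ℝ → ℝ) (r : ℝ × ℝ) : px (fun p => -g p) r = - px g r :=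
  deriv.neg

/-- In the case `ξ_u = 0`, i.e. `ξ = ξ(t,x)` and `η = η¹(t,x) u + η⁰(t,x)`, the
determining system for regular reduction operators of the Burgers equation gives
`η¹ = −ξ_x`, `η⁰ = ξ_t + 2ξξ_x + 3ξ_xx`, together with `ξ_xx = 0` and
`ξ_tt + 2ξξ_tx + 4ξ_tξ_x + 4ξ(ξ_x)² = 0`. -/
theorem stmt18 (ξ η1 η0 : ℝ × ℝ → ℝ)
    (hξ : ContDiff ℝ (⊤ : ℕ∞) ξ) (hη1 : ContDiff ℝ (⊤ : ℕ∞) η1) (hη0 : ContDiff ℝ (⊤ : ℕ∞) η0) :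
    let Ξ : ℝ × ℝ × ℝ → ℝ := fun p => ξ (p.1, p.2.1)
    let H : ℝ × ℝ × ℝ → ℝ := fun p => η1 (p.1, p.2.1) * p.2.2 + η0 (p.1, p.2.1)
    (∀ p : ℝ × ℝ × ℝ, p3 (p3 Ξ) p = 0) →
    (∀ p : ℝ × ℝ × ℝ,
      -2 * p3 (p2 Ξ) p - 2 * p3 Ξ p * Ξ p + 2 * p.2.2 * p3 Ξ p + p3 (p3 H) p = 0) →
    (∀ p : ℝ × ℝ × ℝ,
      2 * p3 (p2 H) p + 2 * p3 Ξ p * H p + H p - p1 Ξ p + p.2.2 * p2 Ξ p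
        - p2 (p2 Ξ) p - 2 * p2 Ξ p * Ξ p = 0) →
    (∀ p : ℝ × ℝ × ℝ,
      p1 H p + p.2.2 * p2 H p + p2 (p2 H) p + 2 * p2 Ξ p * H p = 0) →
    ∀ q : ℝ × ℝ,
      η1 q = -px ξ q ∧
      η0 q = pt ξ q + 2 * ξ q * px ξ q + 3 * px (px ξ) q ∧
      px (px ξ) q = 0 ∧
      pt (pt ξ) q + 2 * ξ q * px (pt ξ) q + 4 * pt ξ q * px ξ q
        + 4 * ξ q * (px ξ q) ^ 2 = 0 := by
  intro Ξ H h1 h2 h3 h4 q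
  clear h1 h2
  -- pointwise computation lemmas
  have cΞ : ∀ p : ℝ × ℝ × ℝ, Ξ p = ξ (p.1, p.2.1) := fun _ => rfl
  have cH : ∀ p : ℝ × ℝ × ℝ, H p = η1 (p.1, p.2.1) * p.2.2 + η0 (p.1, p.2.1) := fun _ => rfl
  have cΞ1 : ∀ p : ℝ × ℝ × ℝ, p1 Ξ p = pt ξ (p.1, p.2.1) := fun _ => rfl
  have cΞ2 : ∀ p : ℝ × ℝ × ℝ, p2 Ξ p = px ξ (p.1, p.2.1) := fun _ => rfl
  have cΞ3 : ∀ p : ℝ × ℝ × ℝ, p3 Ξ p = 0 := fun p => by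
    show deriv (fun _ : ℝ => ξ (p.1, p.2.1)) p.2.2 = 0
    exact deriv_const _ _
  have cΞ22 : ∀ p : ℝ × ℝ × ℝ, p2 (p2 Ξ) p = px (px ξ) (p.1, p.2.1) := fun _ => rfl
  have hH2fun : p2 H = fun r : ℝ × ℝ × ℝ =>
      px η1 (r.1, r.2.1) * r.2.2 + px η0 (r.1, r.2.1) := funext (p2_linear hη1 hη0)
  have cH32 : ∀ p : ℝ × ℝ × ℝ, p3 (p2 H) p = px η1 (p.1, p.2.1) := by
    intro p; rw [hH2fun]; exact p3_linear _ _ p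
  have cH22 : ∀ p : ℝ × ℝ × ℝ, p2 (p2 H) p
      = px (px η1) (p.1, p.2.1) * p.2.2 + px (px η0) (p.1, p.2.1) := by
    intro p; rw [hH2fun]; exact p2_linear (px_smooth hη1) (px_smooth hη0) p
  have cH1 : ∀ p : ℝ × ℝ × ℝ, p1 H p
      = pt η1 (p.1, p.2.1) * p.2.2 + pt η0 (p.1, p.2.1) := p1_linear hη1 hη0
  have cH2 : ∀ p : ℝ × ℝ × ℝ, p2 H p
      = px η1 (p.1, p.2.1) * p.2.2 + px η0 (p.1, p.2.1) := p2_linear hη1 hη0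
  -- extraction of coefficients from (iii)
  have E1 : ∀ r : ℝ × ℝ, η1 r = -px ξ r := by
    intro r
    have h0 := h3 (r.1, r.2, 0)
    have h1' := h3 (r.1, r.2, 1)
    rw [cH32, cΞ3, cH, cΞ1, cΞ2, cΞ22, cΞ] at h0 h1'
    simp only [Prod.mk.eta] at h0 h1'
    linarith
  have E0 : ∀ r : ℝ × ℝ,
      2 * px η1 r + η0 r - pt ξ r - px (px ξ) r - 2 * px ξ r * ξ r = 0 := by
    intro r
    have h0 := h3 (r.1, r.2, 0)
    rw [cH32, cΞ3, cH, cΞ1, cΞ2, cΞ22, cΞ] at h0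
    simp only [Prod.mk.eta] at h0
    linarith
  -- extraction of coefficients from (iv)
  have A : ∀ r : ℝ × ℝ, px η1 r = 0 := by
    intro r
    have h0 := h4 (r.1, r.2, 0)
    have hp := h4 (r.1, r.2, 1)
    have hm := h4 (r.1, r.2, -1)
    rw [cH1, cH2, cH22, cΞ2, cH] at h0 hp hm
    simp only [Prod.mk.eta] at h0 hp hm
    linarith
  have C : ∀ r : ℝ × ℝ, pt η0 r + px (px η0) r + 2 * px ξ r * η0 r = 0 := by
    intro r
    have h0 := h4 (r.1, r.2, 0)
    rw [cH1, cH2, cH22, cΞ2, cH] at h0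
    simp only [Prod.mk.eta] at h0
    linarith
  -- function-level identities
  have fη1 : η1 = fun r => -px ξ r := funext E1
  have pxξx0 : ∀ r : ℝ × ℝ, px (px ξ) r = 0 := by
    intro r
    have ha := A r
    rw [fη1, px_neg] at ha
    linarith
  have fη0 : ∀ r : ℝ × ℝ, η0 r = pt ξ r + 2 * ξ r * px ξ r := by
    intro r
    have e0 := E0 r
    have ha := A r
    have hx := pxξx0 r
    nlinarith [e0, ha, hx]
  have fη0' : η0 = fun r => pt ξ r + 2 * ξ r * px ξ r := funext fη0
  -- derivatives of η0
  have hptη0 : pt η0 q = pt (pt ξ) q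
      + (2 * pt ξ q * px ξ q + 2 * ξ q * pt (px ξ) q) := by
    rw [fη0']
    exact ((hasDeriv_pt (pt_smooth hξ) q.1 q.2).add
      ((HasDerivAt.const_mul 2 (hasDeriv_pt hξ q.1 q.2)).mul
        (hasDeriv_pt (px_smooth hξ) q.1 q.2))).deriv
  have hpxη0 : ∀ r : ℝ × ℝ, px η0 r = px (pt ξ) r
      + (2 * px ξ r * px ξ r + 2 * ξ r * px (px ξ) r) := by
    intro r
    rw [fη0']
    exact ((hasDeriv_px (pt_smooth hξ) r.1 r.2).add
      ((HasDerivAt.const_mul 2 (hasDeriv_px hξ r.1 r.2)).mul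
        (hasDeriv_px (px_smooth hξ) r.1 r.2))).deriv
  have pxη0fun : px η0 = fun r => px (pt ξ) r
      + (2 * px ξ r * px ξ r + 2 * ξ r * px (px ξ) r) := funext hpxη0
  have hpxpxη0 : px (px η0) q = px (px (pt ξ)) q
      + ((2 * px (px ξ) q * px ξ q + 2 * px ξ q * px (px ξ) q)
        + (2 * px ξ q * px (px ξ) q + 2 * ξ q * px (px (px ξ)) q)) := by
    rw [pxη0fun]
    exact ((hasDeriv_px (px_smooth (pt_smooth hξ)) q.1 q.2).add
      (((HasDerivAt.const_mul 2 (hasDeriv_px (px_smooth hξ) q.1 q.2)).mul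
          (hasDeriv_px (px_smooth hξ) q.1 q.2)).add
        ((HasDerivAt.const_mul 2 (hasDeriv_px hξ q.1 q.2)).mul
          (hasDeriv_px (px_smooth (px_smooth hξ)) q.1 q.2)))).deriv
  have pxpxξ0 : px (px ξ) = fun _ : ℝ × ℝ => (0:ℝ) := funext pxξx0
  have hppp : px (px (px ξ)) q = 0 := by rw [pxpxξ0]; exact deriv_const _ _
  have hppt : px (px (pt ξ)) q = 0 := by
    rw [show px (pt ξ) = pt (px ξ) from funext (clairaut hξ), clairaut (px_smooth hξ) q,
      pxpxξ0]
    exact deriv_const _ _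
  -- conclusion
  refine ⟨E1 q, ?_, pxξx0 q, ?_⟩
  · rw [pxξx0 q]; have := fη0 q; linarith
  · have Cq := C q
    rw [hptη0, hpxpxη0, fη0 q, pxξx0 q, hppp, hppt, ← clairaut hξ q] at Cq
    nlinarith [Cq]
end

section
/- Let I, J ⊆ ℝ be nonempty open intervals and let ξ : I × J → ℝ be a smooth function satisfying ξ_xx = 0 and ξ_tt + 2ξ·ξ_tx + 4ξ_t·ξ_x + 4ξ·(ξ_x)² = 0 at every point (t,x) ∈ I × J. Then there exist real constants c0, c1, c2, c3, c4 with (c0, c1, c2) ≠ (0,0,0) such that c2·t² + 2c1·t + c0 ≠ 0 for all t ∈ I and ξ(t,x) = ( (c2·t + c1)·x + c4·t + c3 ) / ( c2·t² + 2c1·t + c0 ) for all (t,x) ∈ I × J. (Consequently, every reduction operator of the Burgers equation of the form Q = ∂_t + ξ(t,x)∂_x + (η¹(t,x)u + η⁰(t,x))∂_u is equivalent to a Lie symmetry operator of the Burgers equation with nonzero coefficient of ∂_t.) -/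
open Set

/-- If `f` has zero derivative at every point of an open convex set, it is constant there. -/
lemma my_const {s : Set ℝ} (hso : IsOpen s) (hsc : Convex ℝ s) {f : ℝ → ℝ}
    (hf : ∀ x ∈ s, HasDerivAt f 0 x) {x y : ℝ} (hx : x ∈ s) (hy : y ∈ s) : f x = f y := by
  apply hsc.is_const_of_fderivWithin_eq_zero
    (fun z hz => (hf z hz).differentiableAt.differentiableWithinAt) ?_ hx hy
  intro z hz
  rw [fderivWithin_of_isOpen hso hz]
  have h := (hf z hz).hasFDerivAt.fderiv
  rw [h]; ext; simp

/-- Any smooth solution `ξ` of the system `ξ_xx = 0`,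
`ξ_tt + 2ξξ_tx + 4ξ_tξ_x + 4ξ(ξ_x)² = 0` on a product of nonempty open intervals
has the form `ξ = ((c₂t + c₁)x + c₄t + c₃)/(c₂t² + 2c₁t + c₀)` with
`(c₀,c₁,c₂) ≠ (0,0,0)` and nonvanishing denominator; hence every reduction operator
`∂_t + ξ(t,x)∂_x + (η¹u + η⁰)∂_u` of the Burgers equation is equivalent to a Lie
symmetry operator with nonzero coefficient of `∂_t`. -/
theorem stmt19 (I J : Set ℝ)
    (hIo : IsOpen I) (hIc : Convex ℝ I) (hIne : I.Nonempty)
    (hJo : IsOpen J) (hJc : Convex ℝ J) (hJne : J.Nonempty)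
    (ξ : ℝ × ℝ → ℝ) (hξ : ContDiffOn ℝ (⊤ : ℕ∞) ξ (I ×ˢ J))
    (hxx : ∀ t ∈ I, ∀ x ∈ J, px (px ξ) (t, x) = 0)
    (htt : ∀ t ∈ I, ∀ x ∈ J,
      pt (pt ξ) (t, x) + 2 * ξ (t, x) * px (pt ξ) (t, x)
        + 4 * pt ξ (t, x) * px ξ (t, x) + 4 * ξ (t, x) * (px ξ (t, x)) ^ 2 = 0) :
    ∃ c0 c1 c2 c3 c4 : ℝ, (c0, c1, c2) ≠ (0, 0, 0) ∧
      (∀ t ∈ I, c2 * t ^ 2 + 2 * c1 * t + c0 ≠ 0) ∧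
      ∀ t ∈ I, ∀ x ∈ J,
        ξ (t, x) = ((c2 * t + c1) * x + c4 * t + c3)
          / (c2 * t ^ 2 + 2 * c1 * t + c0) := by
  classical
  obtain ⟨t0, ht0⟩ := hIne
  obtain ⟨x0, hx0⟩ := hJne
  -- pick a second point x1 ≠ x0 in J
  obtain ⟨ε, hε, hball⟩ := Metric.isOpen_iff.1 hJo x0 hx0
  set x1 : ℝ := x0 + ε / 2 with hx1def
  have hx1 : x1 ∈ J := by
    apply hball
    simp only [Metric.mem_ball, Real.dist_eq, hx1def]
    rw [abs_of_nonneg (by linarith)]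
    linarith
  have hx10 : x1 - x0 ≠ 0 := by simp only [hx1def]; intro h; linarith [hε, h]
  -- the affine coefficients
  set a : ℝ → ℝ := fun t => (ξ (t, x1) - ξ (t, x0)) / (x1 - x0) with ha_def
  set b : ℝ → ℝ := fun t => ξ (t, x0) - a t * x0 with hb_def
  -- smoothness of slices
  have hslice : ∀ c ∈ J, ContDiffOn ℝ (⊤ : ℕ∞) (fun t => ξ (t, c)) I := by
    intro c hc
    exact hξ.comp ((contDiff_id.prodMk contDiff_const).contDiffOn)
      (fun t ht => ⟨ht, hc⟩)
  have hsliceJ : ∀ t ∈ I, ContDiffOn ℝ (⊤ : ℕ∞) (fun x => ξ (t, x)) J := by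
    intro t ht
    exact hξ.comp ((contDiff_const.prodMk contDiff_id).contDiffOn)
      (fun x hx => ⟨ht, hx⟩)
  have haC : ContDiffOn ℝ (⊤ : ℕ∞) a I :=
    ((hslice x1 hx1).sub (hslice x0 hx0)).div_const _
  have hbC : ContDiffOn ℝ (⊤ : ℕ∞) b I :=
    (hslice x0 hx0).sub (haC.mul contDiffOn_const)
  -- ξ is affine in x
  have haffine : ∀ t ∈ I, ∀ x ∈ J, ξ (t, x) = a t * x + b t := by
    intro t ht
    set f : ℝ → ℝ := fun x => ξ (t, x) with hf_def
    have hfC : ContDiffOn ℝ (⊤ : ℕ∞) f J := hsliceJ t ht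
    have hf'C : ContDiffOn ℝ (⊤ : ℕ∞) (deriv f) J := hfC.deriv_of_isOpen hJo (by simp)
    -- deriv f is constant on J
    have hconst : ∀ x ∈ J, deriv f x = deriv f x0 := by
      intro x hx
      apply my_const hJo hJc ?_ hx hx0
      intro z hz
      have hd : HasDerivAt (deriv f) (deriv (deriv f) z) z :=
        (((hf'C.contDiffAt (hJo.mem_nhds hz)).differentiableAt (by simp)).hasDerivAt)
      have h0 : deriv (deriv f) z = 0 := by
        have := hxx t ht z hz
        simpa only [px, pt] using this
      rwa [h0] at hd
    set ca : ℝ := deriv f x0 with hca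
    -- f x = ca * x + (f x0 - ca * x0)
    have hfa : ∀ x ∈ J, f x = ca * x + (f x0 - ca * x0) := by
      intro x hx
      have key : (fun y => f y - ca * y) x = (fun y => f y - ca * y) x0 := by
        apply my_const hJo hJc ?_ hx hx0
        intro z hz
        have hd : HasDerivAt f (deriv f z) z :=
          ((hfC.contDiffAt (hJo.mem_nhds hz)).differentiableAt (by simp)).hasDerivAt
        rw [hconst z hz] at hd
        exact (hd.sub ((hasDerivAt_id z).const_mul ca)).congr_deriv (by simp)
      simp only at key
      linarith [key]
    have hfx1 := hfa x1 hx1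
    have hfx0 := hfa x0 hx0
    have haca : a t = ca := by
      have : f x1 - f x0 = ca * (x1 - x0) := by linarith
      simp only [ha_def]
      rw [show ξ (t, x1) = f x1 from rfl, show ξ (t, x0) = f x0 from rfl, this]
      field_simp
    intro x hx
    have hbx : b t = f x0 - ca * x0 := by
      show ξ (t, x0) - a t * x0 = f x0 - ca * x0
      rw [haca]
    rw [show ξ (t, x) = f x from rfl, hfa x hx, haca, hbx]
  -- derivative functions of a and b
  set a1 : ℝ → ℝ := deriv a with ha1_def
  set a2 : ℝ → ℝ := deriv a1 with ha2_def
  set b1 : ℝ → ℝ := deriv b with hb1_def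
  set b2 : ℝ → ℝ := deriv b1 with hb2_def
  have ha1C : ContDiffOn ℝ (⊤ : ℕ∞) a1 I := haC.deriv_of_isOpen hIo (by simp)
  have hb1C : ContDiffOn ℝ (⊤ : ℕ∞) b1 I := hbC.deriv_of_isOpen hIo (by simp)
  have hA : ∀ t ∈ I, HasDerivAt a (a1 t) t := fun t ht =>
    ((haC.contDiffAt (hIo.mem_nhds ht)).differentiableAt (by simp)).hasDerivAt
  have hA1 : ∀ t ∈ I, HasDerivAt a1 (a2 t) t := fun t ht =>
    ((ha1C.contDiffAt (hIo.mem_nhds ht)).differentiableAt (by simp)).hasDerivAt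
  have hB : ∀ t ∈ I, HasDerivAt b (b1 t) t := fun t ht =>
    ((hbC.contDiffAt (hIo.mem_nhds ht)).differentiableAt (by simp)).hasDerivAt
  have hB1 : ∀ t ∈ I, HasDerivAt b1 (b2 t) t := fun t ht =>
    ((hb1C.contDiffAt (hIo.mem_nhds ht)).differentiableAt (by simp)).hasDerivAt
  -- compute the partial derivatives of ξ
  have hpx : ∀ t ∈ I, ∀ x ∈ J, px ξ (t, x) = a t := by
    intro t ht x hx
    have hev : (fun y => ξ (t, y)) =ᶠ[nhds x] fun y => a t * y + b t :=
      Filter.eventually_of_mem (hJo.mem_nhds hx) (fun y hy => haffine t ht y hy)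
    have hd : HasDerivAt (fun y => a t * y + b t) (a t) x := by
      simpa using ((hasDerivAt_id x).const_mul (a t)).add_const (b t)
    show deriv (fun y => ξ (t, y)) x = a t
    rw [hev.deriv_eq]; exact hd.deriv
  have hpt : ∀ t ∈ I, ∀ x ∈ J, pt ξ (t, x) = a1 t * x + b1 t := by
    intro t ht x hx
    have hev : (fun s => ξ (s, x)) =ᶠ[nhds t] fun s => a s * x + b s :=
      Filter.eventually_of_mem (hIo.mem_nhds ht) (fun s hs => haffine s hs x hx)
    have hd : HasDerivAt (fun s => a s * x + b s) (a1 t * x + b1 t) t :=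
      ((hA t ht).mul_const x).add (hB t ht)
    show deriv (fun s => ξ (s, x)) t = _
    rw [hev.deriv_eq]; exact hd.deriv
  have hptpt : ∀ t ∈ I, ∀ x ∈ J, pt (pt ξ) (t, x) = a2 t * x + b2 t := by
    intro t ht x hx
    have hev : (fun s => pt ξ (s, x)) =ᶠ[nhds t] fun s => a1 s * x + b1 s :=
      Filter.eventually_of_mem (hIo.mem_nhds ht) (fun s hs => hpt s hs x hx)
    have hd : HasDerivAt (fun s => a1 s * x + b1 s) (a2 t * x + b2 t) t :=
      ((hA1 t ht).mul_const x).add (hB1 t ht)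
    show deriv (fun s => pt ξ (s, x)) t = _
    rw [hev.deriv_eq]; exact hd.deriv
  have hpxpt : ∀ t ∈ I, ∀ x ∈ J, px (pt ξ) (t, x) = a1 t := by
    intro t ht x hx
    have hev : (fun y => pt ξ (t, y)) =ᶠ[nhds x] fun y => a1 t * y + b1 t :=
      Filter.eventually_of_mem (hJo.mem_nhds hx) (fun y hy => hpt t ht y hy)
    have hd : HasDerivAt (fun y => a1 t * y + b1 t) (a1 t) x := by
      simpa using ((hasDerivAt_id x).const_mul (a1 t)).add_const (b1 t)
    show deriv (fun y => pt ξ (t, y)) x = _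
    rw [hev.deriv_eq]; exact hd.deriv
  -- the two ODEs
  have hODEa : ∀ t ∈ I, a2 t + 6 * a t * a1 t + 4 * a t ^ 3 = 0 := by
    intro t ht
    have h0 := htt t ht x0 hx0
    have h1 := htt t ht x1 hx1
    rw [hptpt t ht x0 hx0, hpxpt t ht x0 hx0, hpt t ht x0 hx0, hpx t ht x0 hx0,
      haffine t ht x0 hx0] at h0
    rw [hptpt t ht x1 hx1, hpxpt t ht x1 hx1, hpt t ht x1 hx1, hpx t ht x1 hx1,
      haffine t ht x1 hx1] at h1
    have key : (a2 t + 6 * a t * a1 t + 4 * a t ^ 3) * (x1 - x0) = 0 := by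
      linear_combination h1 - h0
    rcases mul_eq_zero.1 key with h | h
    · exact h
    · exact absurd h hx10
  have hODEb : ∀ t ∈ I,
      b2 t + 2 * a1 t * b t + 4 * a t * b1 t + 4 * a t ^ 2 * b t = 0 := by
    intro t ht
    have h0 := htt t ht x0 hx0
    rw [hptpt t ht x0 hx0, hpxpt t ht x0 hx0, hpt t ht x0 hx0, hpx t ht x0 hx0,
      haffine t ht x0 hx0] at h0
    linear_combination h0 - x0 * hODEa t ht
  -- the integrating factor F = exp(2∫a)
  set F : ℝ → ℝ := fun t => Real.exp (2 * ∫ s in t0..t, a s) with hF_def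
  have hFpos : ∀ t, 0 < F t := fun t => Real.exp_pos _
  have haCont : ContinuousOn a I := haC.continuousOn
  have hFd : ∀ t ∈ I, HasDerivAt F (2 * a t * F t) t := by
    intro t ht
    have hsub : uIcc t0 t ⊆ I := hIc.ordConnected.uIcc_subset ht0 ht
    have hint : IntervalIntegrable a MeasureTheory.volume t0 t :=
      (haCont.mono hsub).intervalIntegrable
    have hmeas : StronglyMeasurableAtFilter a (nhds t) :=
      haCont.stronglyMeasurableAtFilter hIo t ht
    have hca : ContinuousAt a t := haCont.continuousAt (hIo.mem_nhds ht)
    have hInt : HasDerivAt (fun u => ∫ s in t0..u, a s) (a t) t :=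
      intervalIntegral.integral_hasDerivAt_right hint hmeas hca
    exact ((hInt.const_mul 2).exp).congr_deriv (by simp only [hF_def]; ring)
  -- the auxiliary functions F1 = F', F2 = F'', H = F·b, H1 = H'
  set F1 : ℝ → ℝ := fun t => 2 * a t * F t with hF1_def
  set F2 : ℝ → ℝ := fun t => (2 * a1 t + 4 * a t ^ 2) * F t with hF2_def
  set H : ℝ → ℝ := fun t => F t * b t with hH_def
  set H1 : ℝ → ℝ := fun t => F1 t * b t + F t * b1 t with hH1_def
  have hF1d : ∀ t ∈ I, HasDerivAt F1 (F2 t) t := by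
    intro t ht
    exact (((hA t ht).const_mul 2).mul (hFd t ht)).congr_deriv
      (by simp only [hF2_def]; ring)
  have hF2d : ∀ t ∈ I, HasDerivAt F2 0 t := by
    intro t ht
    have hsq : HasDerivAt (fun s => a s ^ 2) (2 * a t ^ 1 * a1 t) t := (hA t ht).pow 2
    refine ((((hA1 t ht).const_mul 2).add (hsq.const_mul 4)).mul (hFd t ht)).congr_deriv ?_
    have hode := hODEa t ht
    simp only [Pi.add_apply]
    linear_combination (2 * F t) * hode
  have hHd : ∀ t ∈ I, HasDerivAt H (H1 t) t := by
    intro t ht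
    exact ((hFd t ht).mul (hB t ht)).congr_deriv
      (by try simp only [hH1_def, hF1_def]
          try ring)
  have hH1d : ∀ t ∈ I, HasDerivAt H1 0 t := by
    intro t ht
    refine (((hF1d t ht).mul (hB t ht)).add ((hFd t ht).mul (hB1 t ht))).congr_deriv ?_
    have hode := hODEb t ht
    try simp only [hF2_def, hF1_def]
    linear_combination F t * hode
  -- F2 is constant, F1 is affine, F is quadratic, H1 is constant, H is affine
  have hF2c : ∀ t ∈ I, F2 t = F2 t0 := fun t ht => my_const hIo hIc hF2d ht ht0
  set q2 : ℝ := F2 t0 with hq2_def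
  set r1 : ℝ := F1 t0 - q2 * t0 with hr1_def
  have hF1aff : ∀ t ∈ I, F1 t = q2 * t + r1 := by
    intro t ht
    have key : (fun s => F1 s - q2 * s) t = (fun s => F1 s - q2 * s) t0 := by
      apply my_const hIo hIc ?_ ht ht0
      intro z hz
      have hd := (hF1d z hz).sub ((hasDerivAt_id z).const_mul q2)
      rw [hF2c z hz] at hd
      exact hd.congr_deriv (by simp)
    simp only at key
    simp only [hr1_def]
    linarith [key]
  set r0 : ℝ := F t0 - q2 / 2 * t0 ^ 2 - r1 * t0 with hr0_def
  have hFquad : ∀ t ∈ I, F t = q2 / 2 * t ^ 2 + r1 * t + r0 := by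
    intro t ht
    have key : (fun s => F s - (q2 / 2 * s ^ 2 + r1 * s)) t
        = (fun s => F s - (q2 / 2 * s ^ 2 + r1 * s)) t0 := by
      apply my_const hIo hIc ?_ ht ht0
      intro z hz
      have hq : HasDerivAt (fun s : ℝ => q2 / 2 * s ^ 2 + r1 * s) (q2 * z + r1) z := by
        have h1 := (hasDerivAt_pow 2 z).const_mul (q2 / 2)
        have h2 := (hasDerivAt_id z).const_mul r1
        exact (h1.add h2).congr_deriv (by ring)
      have hFz : HasDerivAt F (q2 * z + r1) z :=
        (hFd z hz).congr_deriv (by rw [← hF1aff z hz]; try simp only [hF1_def])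
      exact (hFz.sub hq).congr_deriv (by simp)
    simp only at key
    simp only [hr0_def]
    linarith [key]
  have hH1c : ∀ t ∈ I, H1 t = H1 t0 := fun t ht => my_const hIo hIc hH1d ht ht0
  set c4 : ℝ := H1 t0 with hc4_def
  set c3 : ℝ := H t0 - c4 * t0 with hc3_def
  have hHaff : ∀ t ∈ I, H t = c4 * t + c3 := by
    intro t ht
    have key : (fun s => H s - c4 * s) t = (fun s => H s - c4 * s) t0 := by
      apply my_const hIo hIc ?_ ht ht0
      intro z hz
      have hd := (hHd z hz).sub ((hasDerivAt_id z).const_mul c4)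
      rw [hH1c z hz] at hd
      exact hd.congr_deriv (by simp)
    simp only at key
    simp only [hc3_def]
    linarith [key]
  -- assemble the constants
  refine ⟨r0, r1 / 2, q2 / 2, c3, c4, ?_, ?_, ?_⟩
  · intro h
    have hcomp : r0 = 0 ∧ r1 / 2 = 0 ∧ q2 / 2 = 0 := by
      simpa [Prod.ext_iff] using h
    have hFt0 : F t0 = q2 / 2 * t0 ^ 2 + r1 * t0 + r0 := hFquad t0 ht0
    have : F t0 = 0 := by
      rw [hFt0]
      have h0 : r0 = 0 := hcomp.1
      have h1 : r1 = 0 := by linarith [hcomp.2.1]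
      have h2 : q2 = 0 := by linarith [hcomp.2.2]
      rw [h0, h1, h2]; ring
    exact absurd this (ne_of_gt (hFpos t0))
  · intro t ht
    have : q2 / 2 * t ^ 2 + 2 * (r1 / 2) * t + r0 = F t := by
      rw [hFquad t ht]; ring
    rw [this]
    exact ne_of_gt (hFpos t)
  · intro t ht x hx
    rw [haffine t ht x hx]
    have hDF : q2 / 2 * t ^ 2 + 2 * (r1 / 2) * t + r0 = F t := by
      rw [hFquad t ht]; ring
    rw [hDF, eq_div_iff (ne_of_gt (hFpos t))]
    have h1 : 2 * a t * F t = q2 * t + r1 := by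
      have := hF1aff t ht
      simpa only [hF1_def] using this
    have h2 : F t * b t = c4 * t + c3 := by
      have := hHaff t ht
      simpa only [hH_def] using this
    linear_combination (x / 2) * h1 + h2
end
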